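/- Let π ∈ S_{NC}(m,n) be an annular non-crossing permutation all of whose cycles have at least 2 elements, and suppose γ_{m,n}π^{-1} has no fixed points. Then all cycles of π and all cycles of γ_{m,n}π^{-1} have exactly 2 elements, and m = n. -/

import Mathlib

/-- The minimal number of transpositions needed to write `π` as a product of transpositions. -/
noncomputable def transLength {N : ℕ} (π : Equiv.Perm (Fin N)) : ℕ :=
  sInf {k | ∃ l : List (Equiv.Perm (Fin N)),
    (∀ τ ∈ l, τ.IsSwap) ∧ l.prod = π ∧ l.length = k}

/-- The permutation `γ_{m,n} = (1,…,m)(m+1,…,m+n)` of `{1,…,m+n}`. -/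
def gammaMN (m n : ℕ) : Equiv.Perm (Fin (m + n)) :=
  finSumFinEquiv.permCongr ((finRotate m).sumCongr (finRotate n))

/-- `π` is `(m,n)`-connected: `π` and `γ_{m,n}` generate a transitive subgroup. -/
def Connected {m n : ℕ} (π : Equiv.Perm (Fin (m + n))) : Prop :=
  ∀ x y : Fin (m + n),
    ∃ g ∈ Subgroup.closure ({π, gammaMN m n} : Set (Equiv.Perm (Fin (m + n)))), g x = y


/-! A product of `k` transpositions moves at most `2k` points. As `π` and `γ π⁻¹` are
fixed-point free and their transposition lengths add up to `m + n`, both bounds are attained,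
the transpositions in minimal factorisations are disjoint, and `π`, `γ π⁻¹` are involutions.
Then `π γ π⁻¹ = γ⁻¹`, so `π` preserves the length of the `γ`-cycle through each point. If
`m ≠ n`, `π` and `γ` therefore both preserve the first cycle of `γ`, contradicting
connectivity, unless one of the cycles is empty; parity excludes that case, since
`sign γ = sign (γ π⁻¹) · sign π = (-1) ^ (m + n) = 1` whereas a single cycle of even length is
odd. -/

open Equiv Equiv.Perm Finset
open scoped Pointwise

section SwapProducts

variable {α : Type*} [DecidableEq α] [Fintype α]

theorem card_support_list_prod_le_of_isSwap {l : List (Perm α)} (hl : ∀ τ ∈ l, τ.IsSwap) :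
    #l.prod.support ≤ 2 * l.length := by
  induction l with
  | nil => simp
  | cons τ l ih =>
    obtain ⟨x, y, hxy, rfl⟩ := hl τ List.mem_cons_self
    rw [List.prod_cons, List.length_cons]
    calc #(swap x y * l.prod).support
        ≤ #((swap x y).support ∪ l.prod.support) := card_le_card (support_mul_le _ _)
      _ ≤ #(swap x y).support + #l.prod.support := card_union_le _ _
      _ ≤ 2 * (l.length + 1) := by
        rw [card_support_swap hxy]
        have := ih fun σ hσ => hl σ (List.mem_cons_of_mem _ hσ)
        omega

theorem list_prod_mul_self_eq_one_of_isSwap {l : List (Perm α)} (hl : ∀ τ ∈ l, τ.IsSwap)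
    (hcard : 2 * l.length ≤ #l.prod.support) : l.prod * l.prod = 1 := by
  induction l with
  | nil => simp
  | cons τ l ih =>
    have hl' : ∀ σ ∈ l, σ.IsSwap := fun σ hσ => hl σ (List.mem_cons_of_mem _ hσ)
    obtain ⟨x, y, hxy, rfl⟩ := hl τ List.mem_cons_self
    simp only [List.prod_cons, List.length_cons] at hcard ⊢
    have hmul : #(swap x y * l.prod).support ≤ #((swap x y).support ∪ l.prod.support) :=
      card_le_card (support_mul_le _ _)
    have hunion := card_union_le (swap x y).support l.prod.support
    have hle := card_support_list_prod_le_of_isSwap hl'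
    rw [card_support_swap hxy] at hunion
    have hdisj : (swap x y).Disjoint l.prod := disjoint_iff_disjoint_support.2 <|
      card_union_eq_card_add_card.1 (by rw [card_support_swap hxy]; omega)
    have hsq : l.prod * l.prod = 1 := ih hl' (by omega)
    rw [← sq, hdisj.commute.mul_pow, sq, sq, swap_mul_self, hsq, one_mul]

end SwapProducts

section TransLength

variable {N : ℕ} (π : Perm (Fin N))

theorem exists_list_isSwap_length_eq_transLength :
    ∃ l : List (Perm (Fin N)), (∀ τ ∈ l, τ.IsSwap) ∧ l.prod = π ∧ l.length = transLength π := by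
  obtain ⟨l, hprod, hl⟩ := (truncSwapFactors π).out
  exact Nat.sInf_mem (s := {k | ∃ l : List (Perm (Fin N)),
    (∀ τ ∈ l, τ.IsSwap) ∧ l.prod = π ∧ l.length = k}) ⟨l.length, l, hl, hprod, rfl⟩

theorem sign_eq_neg_one_pow_transLength : sign π = (-1) ^ transLength π := by
  obtain ⟨l, hl, rfl, hlen⟩ := exists_list_isSwap_length_eq_transLength π
  rw [sign_prod_list_swap hl, hlen]

theorem card_support_le_two_mul_transLength : #π.support ≤ 2 * transLength π := by
  obtain ⟨l, hl, rfl, hlen⟩ := exists_list_isSwap_length_eq_transLength π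
  exact hlen ▸ card_support_list_prod_le_of_isSwap hl

theorem mul_self_eq_one_of_two_mul_transLength_le (h : 2 * transLength π ≤ #π.support) :
    π * π = 1 := by
  obtain ⟨l, hl, rfl, hlen⟩ := exists_list_isSwap_length_eq_transLength π
  exact list_prod_mul_self_eq_one_of_isSwap hl (hlen ▸ h)

end TransLength

open Fin.NatCast in
theorem finRotate_pow_apply_eq_self_iff {n : ℕ} (i : Fin n) (k : ℕ) :
    (finRotate n ^ k) i = i ↔ n ∣ k := by
  obtain _ | n := n
  · exact i.elim0
  have hpow : (finRotate (n + 1) ^ k) i = i + (k : Fin (n + 1)) := by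
    induction k with
    | zero => simp
    | succ k ih => rw [pow_succ', mul_apply, ih, finRotate_apply, Nat.cast_succ, add_assoc]
  rw [hpow, add_eq_left, Fin.natCast_eq_zero]

theorem conj_eq_inv_of_mul_self_eq_one {G : Type*} [Group G] {a g : G} (ha : a * a = 1)
    (hga : g * a⁻¹ * (g * a⁻¹) = 1) : a * g * a⁻¹ = g⁻¹ := by
  have ha' : a⁻¹ = a := inv_eq_of_mul_eq_one_right ha
  rw [ha'] at hga ⊢
  exact eq_inv_of_mul_eq_one_right (by simpa only [mul_assoc] using hga)

theorem Equiv.Perm.pow_apply_eq_self_iff_of_conj_eq_inv {α : Type*} {g π : Perm α}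
    (h : π * g * π⁻¹ = g⁻¹) (k : ℕ) (x : α) : (g ^ k) (π x) = π x ↔ (g ^ k) x = x := by
  have hk : π * g ^ k * π⁻¹ = (g ^ k)⁻¹ := by rw [← conj_pow, h, inv_pow]
  rw [← inv_eq_iff_eq.trans eq_comm, ← hk]
  simp

section Gamma

variable {m n : ℕ}

theorem gammaMN_pow (k : ℕ) :
    gammaMN m n ^ k =
      finSumFinEquiv.permCongr ((finRotate m ^ k).sumCongr (finRotate n ^ k)) := by
  simpa [gammaMN] using
    map_pow (finSumFinEquiv.permCongrHom.toMonoidHom.comp (sumCongrHom _ _))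
      (finRotate m, finRotate n) k |>.symm

theorem gammaMN_pow_castAdd (k : ℕ) (a : Fin m) :
    (gammaMN m n ^ k) (Fin.castAdd n a) = Fin.castAdd n ((finRotate m ^ k) a) := by
  simp [gammaMN_pow, permCongr_apply]

theorem gammaMN_pow_natAdd (k : ℕ) (b : Fin n) :
    (gammaMN m n ^ k) (Fin.natAdd m b) = Fin.natAdd m ((finRotate n ^ k) b) := by
  simp [gammaMN_pow, permCongr_apply]

theorem sign_gammaMN : sign (gammaMN m n) = (-1) ^ (m - 1) * (-1) ^ (n - 1) := by
  rw [gammaMN, sign_permCongr, sign_sumCongr, sign_finRotate, sign_finRotate]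

theorem apply_lt_iff_of_conj_gammaMN_eq_inv {π : Perm (Fin (m + n))}
    (h : π * gammaMN m n * π⁻¹ = (gammaMN m n)⁻¹) (hmn : m ≠ n) (x : Fin (m + n)) :
    (π x : ℕ) < m ↔ (x : ℕ) < m := by
  -- `p` is the length of the `γ_{m,n}`-cycle through `y`
  have hfix : ∀ y : Fin (m + n),
      ∃ p, ((y : ℕ) < m ↔ p = m) ∧ ∀ k, (gammaMN m n ^ k) y = y ↔ p ∣ k := by
    intro y
    refine Fin.addCases (fun a => ⟨m, ?_, fun k => ?_⟩) (fun b => ⟨n, ?_, fun k => ?_⟩) y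
    · simp
    · rw [gammaMN_pow_castAdd, (Fin.castAdd_injective _ _).eq_iff,
        finRotate_pow_apply_eq_self_iff]
    · simp [Ne.symm hmn]
    · rw [gammaMN_pow_natAdd, (Fin.natAdd_injective _ _).eq_iff,
        finRotate_pow_apply_eq_self_iff]
  obtain ⟨p, hp, hpk⟩ := hfix x
  obtain ⟨q, hq, hqk⟩ := hfix (π x)
  have hpq : q = p := Nat.dvd_antisymm
    ((hqk p).1 ((pow_apply_eq_self_iff_of_conj_eq_inv h p x).2 ((hpk p).2 dvd_rfl)))
    ((hpk q).1 ((pow_apply_eq_self_iff_of_conj_eq_inv h q x).1 ((hqk q).2 dvd_rfl)))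
  rw [hp, hq, hpq]

theorem Connected.eq_zero_or_eq_zero_of_apply_lt_iff {π : Perm (Fin (m + n))}
    (hconn : Connected π) (hπ : ∀ x, (π x : ℕ) < m ↔ (x : ℕ) < m) : m = 0 ∨ n = 0 := by
  by_contra! hmn
  have hγ (x : Fin (m + n)) : (gammaMN m n x : ℕ) < m ↔ (x : ℕ) < m := by
    refine Fin.addCases (fun a => ?_) (fun b => ?_) x
    · rw [← pow_one (gammaMN m n), gammaMN_pow_castAdd]
      simp
    · rw [← pow_one (gammaMN m n), gammaMN_pow_natAdd]
      simp
  have hclosure : Subgroup.closure {π, gammaMN m n} ≤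
      MulAction.stabilizer (Perm (Fin (m + n))) {x : Fin (m + n) | (x : ℕ) < m} := by
    rw [Subgroup.closure_le, Set.insert_subset_iff, Set.singleton_subset_iff]
    exact ⟨MulAction.mem_stabilizer_set.2 hπ, MulAction.mem_stabilizer_set.2 hγ⟩
  obtain ⟨g, hg, hgx⟩ := hconn ⟨0, by omega⟩ ⟨m, by omega⟩
  have := MulAction.mem_stabilizer_set.1 (hclosure hg) ⟨0, by omega⟩
  simp only [Perm.smul_def, hgx, Set.mem_ofPred_eq] at this
  omega

theorem eq_of_sign_gammaMN_eq_one (heven : Even (m + n)) (hsign : sign (gammaMN m n) = 1)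
    (h : m = 0 ∨ n = 0) : m = n := by
  rw [sign_gammaMN] at hsign
  rcases h with rfl | rfl
  all_goals
    by_contra hne
    simp only [Nat.zero_sub, pow_zero, one_mul, mul_one,
      neg_one_pow_eq_one_iff_even (by decide : (-1 : ℤˣ) ≠ 1)] at hsign
    obtain ⟨i, hi⟩ := heven
    obtain ⟨j, hj⟩ := hsign
    omega

end Gamma

theorem annular_pairing_structure {m n : ℕ} (π : Equiv.Perm (Fin (m + n)))
    (hconn : Connected π)
    (hlen : transLength π + transLength (gammaMN m n * π⁻¹) = m + n)
    (hπ : ∀ i, π i ≠ i)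
    (hγπ : ∀ i, (gammaMN m n * π⁻¹) i ≠ i) :
    (∀ i, π (π i) = i) ∧
      (∀ i, (gammaMN m n * π⁻¹) ((gammaMN m n * π⁻¹) i) = i) ∧ m = n := by
  set γ := gammaMN m n
  set σ := γ * π⁻¹
  have card_support (τ : Perm (Fin (m + n))) (hτ : ∀ i, τ i ≠ i) : #τ.support = m + n := by
    rw [eq_univ_of_forall fun i => mem_support.2 (hτ i), card_univ, Fintype.card_fin]
  have hπ₂ := card_support π hπ ▸ card_support_le_two_mul_transLength π
  have hσ₂ := card_support σ hγπ ▸ card_support_le_two_mul_transLength σ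
  have hππ : π * π = 1 :=
    mul_self_eq_one_of_two_mul_transLength_le π (by rw [card_support π hπ]; omega)
  have hσσ : σ * σ = 1 :=
    mul_self_eq_one_of_two_mul_transLength_le σ (by rw [card_support σ hγπ]; omega)
  refine ⟨fun i => by simpa using congr($hππ i), fun i => by simpa using congr($hσσ i), ?_⟩
  have heven : Even (m + n) := ⟨transLength π, by omega⟩
  have hsign : sign γ = 1 := by
    rw [← inv_mul_cancel_right γ π, map_mul, sign_eq_neg_one_pow_transLength,
      sign_eq_neg_one_pow_transLength, ← pow_add, add_comm, hlen, heven.neg_one_pow]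
  have hconj : π * γ * π⁻¹ = γ⁻¹ := conj_eq_inv_of_mul_self_eq_one hππ hσσ
  by_contra hmn
  exact hmn <| eq_of_sign_gammaMN_eq_one heven hsign <|
    hconn.eq_zero_or_eq_zero_of_apply_lt_iff (apply_lt_iff_of_conj_gammaMN_eq_inv hconj hmn)
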